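/- arXiv:2312.08326 — 2 statements merged into one kernel-verified Lean document; each statement's English description precedes it below -/
import Mathlib

section
/- If a persistence module V contains a nonzero right-closed point, i.e. there exist r ≥ 0 and a nonzero v ∈ V(r) with V(r ≤ r+ε)(v) = 0 for every ε > 0, then V is not locally compact. -/
open CategoryTheory CategoryTheory.Limits
open scoped NNReal ENNReal

noncomputable section

abbrev PersMod : Type 1 := ℝ≥0 ⥤ ModuleCat.{0} ℚ

abbrev pCh : Type 1 := CochainComplex PersMod ℕ

namespace Pers

open Classical in
/-- The pointwise carrier of the interval persistence module `𝕀_{[s,t)}`. -/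
def icar (s t : ℝ≥0∞) (u : ℝ≥0) : Submodule ℚ ℚ :=
  if s ≤ (u : ℝ≥0∞) ∧ (u : ℝ≥0∞) < t then ⊤ else ⊥

lemma icar_le_of_le {s t : ℝ≥0∞} {u v : ℝ≥0} (huv : u ≤ v) (hv : (v : ℝ≥0∞) < t) :
    icar s t u ≤ icar s t v := by
  classical
  unfold icar
  by_cases h1 : s ≤ (u : ℝ≥0∞) ∧ (u : ℝ≥0∞) < t
  · rw [if_pos h1, if_pos ⟨h1.1.trans (ENNReal.coe_le_coe.mpr huv), hv⟩]
  · rw [if_neg h1]; exact bot_le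

lemma icar_mono_birth {s s' : ℝ≥0∞} (h : s' ≤ s) (t : ℝ≥0∞) (u : ℝ≥0) :
    icar s t u ≤ icar s' t u := by
  classical
  unfold icar
  by_cases h1 : s ≤ (u : ℝ≥0∞) ∧ (u : ℝ≥0∞) < t
  · rw [if_pos h1, if_pos ⟨h.trans h1.1, h1.2⟩]
  · rw [if_neg h1]; exact bot_le

/-- The interval persistence module `𝕀_{[s,t)}`. -/
def intervalMod (s t : ℝ≥0∞) : PersMod where
  obj u := ModuleCat.of ℚ (icar s t u)
  map {u v} huv :=
    if hv : (v : ℝ≥0∞) < t then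
      ModuleCat.ofHom (Submodule.inclusion (icar_le_of_le (leOfHom huv) hv))
    else 0
  map_id u := by
    by_cases hu : (u : ℝ≥0∞) < t
    · rw [dif_pos hu]
      ext x
      rfl
    · rw [dif_neg hu]
      have hbot : icar s t u = ⊥ := if_neg (fun h => hu h.2)
      haveI h1 : Subsingleton (icar s t u) := by rw [hbot]; infer_instance
      haveI : Subsingleton ↑(ModuleCat.of ℚ ↥(icar s t u)) := h1
      exact (ModuleCat.isZero_of_subsingleton _).eq_of_src _ _
  map_comp {u v w} huv hvw := by
    by_cases hw : (w : ℝ≥0∞) < t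
    · have hv : (v : ℝ≥0∞) < t :=
        lt_of_le_of_lt (ENNReal.coe_le_coe.mpr (leOfHom hvw)) hw
      rw [dif_pos hw, dif_pos hw, dif_pos hv]
      ext x
      rfl
    · rw [dif_neg hw, dif_neg hw, Limits.comp_zero]

end Pers

namespace Pers

/-- The inclusion `𝕀_{[a,t)} ⟶ 𝕀_{[b,t)}` of interval modules, for `b ≤ a`. -/
def intervalModIncl (t : ℝ≥0∞) {a b : ℝ≥0∞} (h : b ≤ a) :
    intervalMod a t ⟶ intervalMod b t where
  app u := ModuleCat.ofHom (Submodule.inclusion (icar_mono_birth h t u))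
  naturality {u v} huv := by
    dsimp only [intervalMod]
    by_cases hv : (v : ℝ≥0∞) < t
    · rw [dif_pos hv, dif_pos hv]
      ext x
      rfl
    · rw [dif_neg hv, dif_neg hv, Limits.zero_comp, Limits.comp_zero]

open Classical in
/-- A totalized version of the inclusion of interval modules:
the inclusion when `b ≤ a`, and `0` otherwise. -/
def intervalModHom (t : ℝ≥0∞) (a b : ℝ≥0∞) : intervalMod a t ⟶ intervalMod b t :=
  if h : b ≤ a then intervalModIncl t h else 0

/-- Degree profile of a complex concentrated in degrees `m` (value `c`) and
`m+1` (value `d`); value `⊤` encodes the zero module. -/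
def phi (m : ℕ) (c d : ℝ≥0∞) : ℕ → ℝ≥0∞ :=
  fun n => if n = m then c else if n = m + 1 then d else ⊤

lemma phi_mono {m : ℕ} {c d c' d' : ℝ≥0∞} (hc : c' ≤ c) (hd : d' ≤ d) (n : ℕ) :
    phi m c' d' n ≤ phi m c d n := by
  unfold phi
  split_ifs <;> first | exact hc | exact hd | exact le_rfl

open Classical in
/-- The persistent cochain complex concentrated in degrees `m` and `m + 1`,
with values the 'step' interval modules `𝕀_{[c,∞)}` and `𝕀_{[d,∞)}`, and with
differential the natural inclusion (when `d ≤ c`). -/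
def twoStep (m : ℕ) (c d : ℝ≥0∞) : pCh where
  X n := intervalMod (phi m c d n) ⊤
  d i j :=
    if i = m ∧ j = m + 1 then intervalModHom ⊤ (phi m c d i) (phi m c d j) else 0
  shape i j hij := by
    rw [if_neg]
    rintro ⟨rfl, rfl⟩
    exact hij rfl
  d_comp_d' i j k hij hjk := by
    by_cases hi : i = m ∧ j = m + 1
    · rw [if_neg (by omega : ¬(j = m ∧ k = m + 1))]
      exact Limits.comp_zero
    · rw [if_neg hi]
      exact Limits.zero_comp

/-- The morphism of two-step complexes induced by inclusions. -/
def twoStepHom (m : ℕ) {c d c' d' : ℝ≥0∞} (hdc : d ≤ c) (hdc' : d' ≤ c')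
    (hc : c' ≤ c) (hd : d' ≤ d) : twoStep m c d ⟶ twoStep m c' d' where
  f n := intervalModIncl ⊤ (phi_mono hc hd n)
  comm' i j hij := by
    dsimp only [twoStep]
    by_cases hi : i = m ∧ j = m + 1
    · rw [if_pos hi, if_pos hi]
      obtain ⟨rfl, rfl⟩ := hi
      have h1 : phi i c d (i + 1) ≤ phi i c d i := by
        simp [phi, Nat.succ_ne_self]
        exact hdc
      have h1' : phi i c' d' (i + 1) ≤ phi i c' d' i := by
        simp [phi, Nat.succ_ne_self]
        exact hdc'
      rw [intervalModHom, dif_pos h1', intervalModHom, dif_pos h1]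
      ext u x
      rfl
    · rw [if_neg hi, if_neg hi, Limits.zero_comp, Limits.comp_zero]

end Pers

namespace Pers

open ZeroObject

/-- The interval sphere `𝕊^k_{[s,t)}` (with `t = ⊤` allowed). -/
def sphere (k : ℕ) (s : ℝ≥0) (t : ℝ≥0∞) : pCh :=
  match k with
  | 0 => (HomologicalComplex.single PersMod (ComplexShape.up ℕ) 0).obj
      (intervalMod (s : ℝ≥0∞) t)
  | m + 1 => twoStep m t (s : ℝ≥0∞)

/-- The persistent disk `𝔻^k_s` (with the convention `𝔻^0_s = 0`). -/
def disk (k : ℕ) (s : ℝ≥0) : pCh :=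
  match k with
  | 0 => 0
  | m + 1 => twoStep m (s : ℝ≥0∞) (s : ℝ≥0∞)

/-- The canonical inclusion `𝕊^k_{[s,t)} ⟶ 𝔻^k_s`. -/
def sphereToDisk (k : ℕ) (s : ℝ≥0) (t : ℝ≥0∞) (h : (s : ℝ≥0∞) ≤ t) :
    sphere k s t ⟶ disk k s :=
  match k with
  | 0 => 0
  | m + 1 => twoStepHom m h le_rfl h le_rfl

/-- The canonical inclusion `𝔻^k_t ⟶ 𝔻^k_s` for `s ≤ t`. -/
def diskToDisk (k : ℕ) (s t : ℝ≥0) (h : s ≤ t) : disk k t ⟶ disk k s :=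
  match k with
  | 0 => 0
  | m + 1 => twoStepHom m le_rfl le_rfl (ENNReal.coe_le_coe.mpr h) (ENNReal.coe_le_coe.mpr h)

/-- The set `I₀` of generating maps `𝕊^k_{[s,t)} ⟶ 𝔻^k_s`, `0 ≤ s < t < ∞`. -/
inductive I0mem : ∀ ⦃A B : pCh⦄, (A ⟶ B) → Prop
  | mk (k : ℕ) (s t : ℝ≥0) (h : s < t) :
      I0mem (sphereToDisk k s (t : ℝ≥0∞) (ENNReal.coe_le_coe.mpr h.le))

/-- The set `I∞` of generating maps `𝕊^k_{[s,∞)} ⟶ 𝔻^k_s`. -/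
inductive IinfMem : ∀ ⦃A B : pCh⦄, (A ⟶ B) → Prop
  | mk (k : ℕ) (s : ℝ≥0) : IinfMem (sphereToDisk k s ⊤ le_top)

/-- The set `I = I₀ ∪ I∞`. -/
def Imem : MorphismProperty pCh := fun _ _ f => I0mem f ∨ IinfMem f

/-- The set `J₀` of maps `𝔻^k_t ⟶ 𝔻^k_s`, `0 ≤ s < t < ∞`. -/
inductive J0mem : ∀ ⦃A B : pCh⦄, (A ⟶ B) → Prop
  | mk (k : ℕ) (s t : ℝ≥0) (h : s < t) : J0mem (diskToDisk k s t h.le)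

/-- The set `J∞` of maps `0 ⟶ 𝔻^k_s`. -/
inductive JinfMem : ∀ ⦃A B : pCh⦄, (A ⟶ B) → Prop
  | mk (k : ℕ) (s : ℝ≥0) : JinfMem (0 : (0 : pCh) ⟶ disk k s)

/-- The set `J = J₀ ∪ J∞`. -/
def Jmem : MorphismProperty pCh := fun _ _ f => J0mem f ∨ JinfMem f

/-- `Inj S`: the class of morphisms with the right lifting property with respect
to every morphism in `S`. -/
def Inj (S : MorphismProperty pCh) : MorphismProperty pCh :=
  fun _ _ f => ∀ ⦃A B : pCh⦄ (i : A ⟶ B), S i → HasLiftingProperty i f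

/-- `Cof S`: the class of morphisms with the left lifting property with respect
to every morphism in `Inj S`. -/
def Cof (S : MorphismProperty pCh) : MorphismProperty pCh :=
  fun _ _ i => ∀ ⦃X Y : pCh⦄ (f : X ⟶ Y), Inj S f → HasLiftingProperty i f

/-- Evaluation of a persistent cochain complex at a time `u`. -/
def evalAt (u : ℝ≥0) : pCh ⥤ CochainComplex (ModuleCat.{0} ℚ) ℕ :=
  ((evaluation ℝ≥0 (ModuleCat.{0} ℚ)).obj u).mapHomologicalComplex (ComplexShape.up ℕ)

/-- The class `W` of pointwise quasi-isomorphisms. -/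
def Wclass : MorphismProperty pCh :=
  fun _ _ f => ∀ u : ℝ≥0, QuasiIso ((evalAt u).map f)

end Pers

namespace Pers

/-- An object of a functor category indexed by `[0,∞)` is tame if there is a finite
set of reals such that structure maps not crossing any of them are isomorphisms. -/
def TameFunctor {C : Type*} [Category C] (F : ℝ≥0 ⥤ C) : Prop :=
  ∃ T : Finset ℝ≥0, ∀ (s u : ℝ≥0) (h : s ≤ u),
    (∀ r ∈ T, ¬(s < r ∧ r ≤ u)) → IsIso (F.map (homOfLE h))

/-- Tameness for a persistent cochain complex: all structure maps away from a finite
set of critical values are isomorphisms (in every degree). -/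
def TamePCh (X : pCh) : Prop :=
  ∃ T : Finset ℝ≥0, ∀ (s u : ℝ≥0) (h : s ≤ u),
    (∀ r ∈ T, ¬(s < r ∧ r ≤ u)) → ∀ k : ℕ, IsIso ((X.X k).map (homOfLE h))

/-- An object `X` of a category is compact if `Hom(X, -)` preserves filtered colimits. -/
def IsCompactObject {C : Type*} [Category C] (X : C) : Prop :=
  ∀ (J : Type) (_ : SmallCategory J) (_ : IsFiltered J),
    Nonempty (PreservesColimitsOfShape J (coyoneda.obj (Opposite.op X)))

/-- A persistence module is locally compact if every point lies in a compact subfunctor. -/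
def LocallyCompactMod (V : PersMod) : Prop :=
  ∀ (r : ℝ≥0) (v : V.obj r), ∃ (U : PersMod) (ι : U ⟶ V),
    Mono ι ∧ IsCompactObject U ∧ v ∈ Set.range (ι.app r)

/-- A persistent cochain complex is locally compact if every element lies in a compact
subobject. -/
def LocallyCompactPCh (X : pCh) : Prop :=
  ∀ (k : ℕ) (r : ℝ≥0) (x : (X.X k).obj r), ∃ (W : pCh) (ι : W ⟶ X),
    Mono ι ∧ IsCompactObject W ∧ x ∈ Set.range ((ι.f k).app r)

/-- A morphism is a retract of another morphism (in the arrow category). -/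
def IsRetractOfArrow {C : Type*} [Category C] {X Y X' Y' : C}
    (f : X ⟶ Y) (g : X' ⟶ Y') : Prop :=
  ∃ (i : Arrow.mk f ⟶ Arrow.mk g) (r : Arrow.mk g ⟶ Arrow.mk f), i ≫ r = 𝟙 (Arrow.mk f)

/-- The axioms of a model structure on `pCh`, given by classes of weak equivalences,
fibrations and cofibrations. -/
structure IsModelStructure (Weq Fib Cofib : MorphismProperty pCh) : Prop where
  /-- two-out-of-three: compositions -/
  weq_comp : ∀ {X Y Z : pCh} (f : X ⟶ Y) (g : Y ⟶ Z), Weq f → Weq g → Weq (f ≫ g)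
  /-- two-out-of-three: right cancellation -/
  weq_of_comp_left : ∀ {X Y Z : pCh} (f : X ⟶ Y) (g : Y ⟶ Z), Weq f → Weq (f ≫ g) → Weq g
  /-- two-out-of-three: left cancellation -/
  weq_of_comp_right : ∀ {X Y Z : pCh} (f : X ⟶ Y) (g : Y ⟶ Z), Weq g → Weq (f ≫ g) → Weq f
  /-- the classes are closed under retracts -/
  weq_retract : ∀ {X Y X' Y' : pCh} (f : X ⟶ Y) (g : X' ⟶ Y'),
    IsRetractOfArrow f g → Weq g → Weq f
  fib_retract : ∀ {X Y X' Y' : pCh} (f : X ⟶ Y) (g : X' ⟶ Y'),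
    IsRetractOfArrow f g → Fib g → Fib f
  cof_retract : ∀ {X Y X' Y' : pCh} (f : X ⟶ Y) (g : X' ⟶ Y'),
    IsRetractOfArrow f g → Cofib g → Cofib f
  /-- lifting of trivial cofibrations against fibrations -/
  lift_triv_cof : ∀ {A B X Y : pCh} (i : A ⟶ B) (p : X ⟶ Y),
    Cofib i → Weq i → Fib p → HasLiftingProperty i p
  /-- lifting of cofibrations against trivial fibrations -/
  lift_triv_fib : ∀ {A B X Y : pCh} (i : A ⟶ B) (p : X ⟶ Y),
    Cofib i → Fib p → Weq p → HasLiftingProperty i p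
  /-- factorization as a trivial cofibration followed by a fibration -/
  fact₁ : ∀ {X Y : pCh} (f : X ⟶ Y), ∃ (Z : pCh) (i : X ⟶ Z) (p : Z ⟶ Y),
    Cofib i ∧ Weq i ∧ Fib p ∧ i ≫ p = f
  /-- factorization as a cofibration followed by a trivial fibration -/
  fact₂ : ∀ {X Y : pCh} (f : X ⟶ Y), ∃ (Z : pCh) (i : X ⟶ Z) (p : Z ⟶ Y),
    Cofib i ∧ Fib p ∧ Weq p ∧ i ≫ p = f

end Pers

namespace Pers

/-- A morphism is a pushout of a coproduct of morphisms in `S`. -/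
def IsPushoutOfCoproductsOf (S : MorphismProperty pCh) : MorphismProperty pCh :=
  fun A B g => ∃ (Γ : Type) (Xs Ys : Γ → pCh) (ι : ∀ γ, Xs γ ⟶ Ys γ),
    (∀ γ, S (ι γ)) ∧ ∃ (a : (∐ Xs) ⟶ A) (b : (∐ Ys) ⟶ B),
      IsPushout (Limits.Sigma.map fun γ => ι γ) a b g

/-- The inclusion functor of the initial segment `Set.Iio b` of a preorder. -/
def iioFunctor {β : Type} [Preorder β] (b : β) : Set.Iio b ⥤ β :=
  Monotone.functor (f := (Subtype.val : Set.Iio b → β)) (fun _ _ h => h)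

/-- The cocone over the restriction of `F` to `Set.Iio b` with apex `F.obj b`. -/
def iioCocone {β : Type} [Preorder β] (F : β ⥤ pCh) (b : β) :
    Cocone (iioFunctor b ⋙ F) where
  pt := F.obj b
  ι :=
    { app := fun x => F.map (homOfLE x.2.le)
      naturality := by
        intro x y g
        dsimp [iioFunctor, Monotone.functor]
        rw [Category.comp_id, ← F.map_comp]
        exact congrArg F.map (Subsingleton.elim _ _) }

/-- A witness that `f : X ⟶ Y` is a transfinite composition of morphisms in `S`:
a well-ordered continuous chain starting at `X`, with colimit `Y`, all whose
successor maps lie in `S`. -/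
structure TransfiniteCompositionWitness (S : MorphismProperty pCh)
    {X Y : pCh} (f : X ⟶ Y) where
  /-- the (well-ordered) indexing type -/
  β : Type
  [lo : LinearOrder β]
  [bot : OrderBot β]
  [succ : SuccOrder β]
  [wf : WellFoundedLT β]
  /-- the chain -/
  F : β ⥤ pCh
  /-- the chain starts at `X` -/
  iso : F.obj ⊥ ≅ X
  /-- the maps to the colimit `Y` -/
  incl : F ⟶ (Functor.const β).obj Y
  /-- `Y` is the colimit of the chain -/
  isColimit : IsColimit (Cocone.mk Y incl)
  /-- each successor map belongs to `S` -/
  succ_mem : ∀ b : β, ¬ IsMax b → S (F.map (homOfLE (Order.le_succ b)))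
  /-- the chain is continuous at every limit element -/
  limit_continuous : ∀ b : β, Order.IsSuccLimit b →
    Nonempty (IsColimit (iioCocone F b))
  /-- the composite of the whole chain is `f` -/
  fac : iso.inv ≫ incl.app ⊥ = f

/-- `f` is a transfinite composition of morphisms in `S`. -/
def IsTransfiniteCompositionOf (S : MorphismProperty pCh) {X Y : pCh}
    (f : X ⟶ Y) : Prop :=
  Nonempty (TransfiniteCompositionWitness S f)

open ZeroObject in
/-- An `I`-cell complex: an object `X` such that `0 ⟶ X` is a transfinite composition
of pushouts of coproducts of maps in `I`. -/
def IsICellComplex (X : pCh) : Prop :=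
  IsTransfiniteCompositionOf (IsPushoutOfCoproductsOf Imem) (0 : (0 : pCh) ⟶ X)

end Pers

/-- The category of copersistent simplicial sets. -/
abbrev CoPersSSet : Type 1 := ℝ≥0ᵒᵖ ⥤ SSet.{0}

namespace Pers

/-- Tameness for a copersistent simplicial set. -/
def TameCo (F : CoPersSSet) : Prop :=
  ∃ T : Finset ℝ≥0, ∀ (s u : ℝ≥0) (h : s ≤ u),
    (∀ r ∈ T, ¬(s < r ∧ r ≤ u)) → IsIso (F.map (homOfLE h).op)

/-- A simplex of a simplicial set is degenerate if it is in the image of a simplex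
of strictly smaller dimension. -/
def IsDegenerate (K : SSet) {n : ℕ}
    (x : K.obj (Opposite.op (SimplexCategory.mk n))) : Prop :=
  ∃ (m : ℕ) (_ : m < n) (g : SimplexCategory.mk n ⟶ SimplexCategory.mk m)
    (y : K.obj (Opposite.op (SimplexCategory.mk m))), K.map g.op y = x

/-- A simplicial set is finite if it has finitely many nondegenerate simplices. -/
def FiniteSSet (K : SSet) : Prop :=
  Finite (Σ n : ℕ, {x : K.obj (Opposite.op (SimplexCategory.mk n)) // ¬ IsDegenerate K x})

end Pers

/-!
A nonzero right-closed point `u ∈ U(r)` obstructs compactness of `U`. The closed interval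
module `𝕀_{[0,r]}` is the filtered colimit of the modules `𝕀_{[0,t)}` as `t` decreases to `r`,
and a functional on `U(r)` that does not vanish at `u` gives a morphism `U ⟶ 𝕀_{[0,r]}` that
is nonzero at `u`. If `U` were compact, this morphism would factor through some `𝕀_{[0,t)}`,
whose structure maps `r ≤ w < t` are injective; since `u` dies along every `U(r ≤ w)` with
`w > r`, its image would be `0`. A compact subfunctor of `V` through the given point would
contain such a `u`.
-/

namespace Pers

open OrderDual

/-- `PLift (u ∈ S) → ℚ` is `ℚ` for `u ∈ S` and `0` otherwise, and the structure maps are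
precomposition, so no case distinction is needed anywhere. -/
def indicatorMod (S : LowerSet ℝ≥0) : PersMod where
  obj u := ModuleCat.of ℚ (PLift (u ∈ S) → ℚ)
  map h := ModuleCat.ofHom (LinearMap.funLeft ℚ ℚ (PLift.map (S.lower (leOfHom h))))

def indicatorFunctor : (LowerSet ℝ≥0)ᵒᵈ ⥤ PersMod where
  obj S := indicatorMod (ofDual S)
  map h :=
    { app _ := ModuleCat.ofHom (LinearMap.funLeft ℚ ℚ (PLift.map fun hu => leOfHom h hu)) }

section FilteredIntersection

variable {J : Type} [SmallCategory J] [IsFiltered J] {F : J ⥤ (LowerSet ℝ≥0)ᵒᵈ}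

lemma exists_mem_imp_mem_pt (c : Cocone F)
    (hc : ∀ u, (∀ j, u ∈ ofDual (F.obj j)) → u ∈ ofDual c.pt) (u : ℝ≥0) :
    ∃ j, u ∈ ofDual (F.obj j) → u ∈ ofDual c.pt := by
  by_contra! h
  exact (h IsFiltered.nonempty.some).2 (hc u fun j => (h j).1)

lemma ι_app_app_funLeft_eq (s : Cocone (F ⋙ indicatorFunctor)) {u : ℝ≥0} {P : Prop}
    (x : PLift P → ℚ) {j k : J} (hj : u ∈ ofDual (F.obj j) → P)
    (hk : u ∈ ofDual (F.obj k) → P) :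
    (s.ι.app j).app u (LinearMap.funLeft ℚ ℚ (PLift.map hj) x) =
      (s.ι.app k).app u (LinearMap.funLeft ℚ ℚ (PLift.map hk) x) := by
  rw [← s.w (IsFiltered.leftToMax j k), ← s.w (IsFiltered.rightToMax j k)]
  -- both arguments are now `x` evaluated at some proof of `P`
  rfl

variable (c : Cocone F) (hc : ∀ u, (∀ j, u ∈ ofDual (F.obj j)) → u ∈ ofDual c.pt)

/-- At `u`, the descended map goes through any stage `j` with `u ∈ F j → u ∈ c.pt`; by
`ι_app_app_funLeft_eq` the choice of `j` does not matter. -/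
def isColimitMapCoconeIndicatorFunctor : IsColimit (indicatorFunctor.mapCocone c) where
  desc s :=
    { app u := ModuleCat.ofHom <|
        ((s.ι.app (exists_mem_imp_mem_pt c hc u).choose).app u).hom ∘ₗ
          LinearMap.funLeft ℚ ℚ (PLift.map (exists_mem_imp_mem_pt c hc u).choose_spec)
      naturality u v h := by
        ext x
        change _ = s.pt.map h ((s.ι.app _).app u _)
        rw [← NatTrans.naturality_apply]
        exact ι_app_app_funLeft_eq s x
          (fun hv => (ofDual c.pt).lower (leOfHom h)
            ((exists_mem_imp_mem_pt c hc v).choose_spec hv))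
          (fun hv => (exists_mem_imp_mem_pt c hc u).choose_spec
            ((ofDual (F.obj _)).lower (leOfHom h) hv)) }
  fac s j := by
    ext u x
    exact ι_app_app_funLeft_eq s x
      (fun hu => leOfHom (c.ι.app j) ((exists_mem_imp_mem_pt c hc u).choose_spec hu)) id
  uniq s m hm := by
    ext u x
    change _ = (s.ι.app _).app u _
    rw [← hm]
    rfl

end FilteredIntersection

def iioDiagram (r : ℝ≥0) : (Set.Ioi r)ᵒᵈ ⥤ (LowerSet ℝ≥0)ᵒᵈ :=
  Monotone.functor (f := fun t => toDual (LowerSet.Iio ((ofDual t : Set.Ioi r) : ℝ≥0)))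
    fun _ _ h => (LowerSet.Iio_strictMono _).monotone h

def iicCocone (r : ℝ≥0) : Cocone (iioDiagram r) where
  pt := toDual (LowerSet.Iic r)
  ι := { app t := homOfLE fun _ hu =>
    LowerSet.mem_Iio_iff.mpr (lt_of_le_of_lt (LowerSet.mem_Iic_iff.mp hu) (ofDual t).2) }

def isColimitIicCocone (r : ℝ≥0) : IsColimit (indicatorFunctor.mapCocone (iicCocone r)) :=
  isColimitMapCoconeIndicatorFunctor _ fun _ hu => LowerSet.mem_Iic_iff.mpr <|
    le_of_forall_gt_imp_ge_of_dense fun t ht =>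
      (LowerSet.mem_Iio_iff.mp (hu (toDual ⟨t, ht⟩))).le

def toIndicatorIic {U : PersMod} {r : ℝ≥0} (f : Module.Dual ℚ (U.obj r)) :
    U ⟶ indicatorMod (LowerSet.Iic r) where
  app s := ModuleCat.ofHom
    (LinearMap.pi fun hs => f ∘ₗ (U.map (homOfLE (LowerSet.mem_Iic_iff.mp hs.down))).hom)
  naturality s t h := by
    ext x
    funext ht
    change f (U.map _ (U.map h x)) = f (U.map _ x)
    rw [← ConcreteCategory.comp_apply, ← U.map_comp]
    rfl

lemma toIndicatorIic_app_self {U : PersMod} {r : ℝ≥0} (f : Module.Dual ℚ (U.obj r))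
    (x : U.obj r) : (toIndicatorIic f).app r x ⟨LowerSet.mem_Iic_iff.mpr le_rfl⟩ = f x := by
  change f (U.map (𝟙 r) x) = f x
  rw [U.map_id]
  rfl

lemma indicatorMod_map_injective {S : LowerSet ℝ≥0} {u v : ℝ≥0} (h : u ≤ v)
    (hv : v ∈ S) : Function.Injective ((indicatorMod S).map (homOfLE h)) :=
  LinearMap.funLeft_injective_of_surjective _ _ _ fun _ => ⟨⟨hv⟩, rfl⟩

def IsRightClosedPoint {V : PersMod} {r : ℝ≥0} (v : V.obj r) : Prop :=
  ∀ ⦃s : ℝ≥0⦄ (h : r < s), V.map (homOfLE h.le) v = 0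

lemma isRightClosedPoint_of_forall_pos {V : PersMod} {r : ℝ≥0} {v : V.obj r}
    (h : ∀ ε : ℝ≥0, 0 < ε → V.map (homOfLE (le_self_add : r ≤ r + ε)) v = 0) :
    IsRightClosedPoint v := by
  intro s hs
  obtain ⟨ε, rfl⟩ := exists_add_of_le hs.le
  exact h ε ((lt_add_iff_pos_right r).mp hs)

lemma IsRightClosedPoint.of_app {U V : PersMod} (ι : U ⟶ V) [Mono ι] {r : ℝ≥0}
    {u : U.obj r} (h : IsRightClosedPoint (ι.app r u)) : IsRightClosedPoint u := fun s hs =>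
  (ModuleCat.mono_iff_injective (ι.app s)).mp inferInstance <| by
    rw [NatTrans.naturality_apply, h hs, map_zero]

lemma IsRightClosedPoint.app_eq_zero {U W : PersMod} {r : ℝ≥0} {u : U.obj r}
    (hu : IsRightClosedPoint u) (g : U ⟶ W) {w : ℝ≥0} (hrw : r < w)
    (hinj : Function.Injective (W.map (homOfLE hrw.le))) : g.app r u = 0 :=
  hinj <| by rw [← NatTrans.naturality_apply, hu hrw, map_zero, map_zero]

theorem not_isCompactObject_of_isRightClosedPoint {U : PersMod} {r : ℝ≥0} {u : U.obj r}
    (hu0 : u ≠ 0) (hu : IsRightClosedPoint u) : ¬ IsCompactObject U := by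
  intro hU
  obtain ⟨_⟩ := hU (Set.Ioi r)ᵒᵈ inferInstance inferInstance
  obtain ⟨f, hf⟩ : ∃ f : Module.Dual ℚ (U.obj r), f u ≠ 0 := by
    by_contra! h
    exact hu0 ((Module.forall_dual_apply_eq_zero_iff ℚ u).mp h)
  obtain ⟨t, g, hg⟩ := Types.jointly_surjective _
    (isColimitOfPreserves (coyoneda.obj (Opposite.op U)) (isColimitIicCocone r))
    (toIndicatorIic f)
  obtain ⟨w, hrw, hwt⟩ := exists_between (Set.mem_Ioi.mp (ofDual t).2)
  have hg0 : g.app r u = 0 :=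
    hu.app_eq_zero g hrw (indicatorMod_map_injective _ (LowerSet.mem_Iio_iff.mpr hwt))
  apply hf
  rw [← toIndicatorIic_app_self f u, ← hg]
  change (indicatorFunctor.map ((iicCocone r).ι.app t)).app r (g.app r u) _ = 0
  rw [hg0]
  rfl

/-- If a persistence module `V` contains a nonzero right-closed
point, i.e. a nonzero `v ∈ V(r)` killed by every structure map `V(r ≤ r + ε)` with
`ε > 0`, then `V` is not locally compact. -/
theorem not_locallyCompact_of_rightClosed (V : PersMod) (r : ℝ≥0) (v : V.obj r)
    (hv : v ≠ 0)
    (hrc : ∀ ε : ℝ≥0, 0 < ε → V.map (homOfLE (le_self_add : r ≤ r + ε)) v = 0) :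
    ¬ LocallyCompactMod V := by
  intro hV
  obtain ⟨U, ι, _, hU, u, rfl⟩ := hV r v
  refine not_isCompactObject_of_isRightClosedPoint (fun hu => hv ?_)
    ((isRightClosedPoint_of_forall_pos hrc).of_app ι) hU
  rw [hu, map_zero]

end Pers
end
end

section
/- Every tame object X of pCh is cofibrant in the interval-sphere model structure: the unique map 0 → X belongs to Cof(I). -/
open CategoryTheory CategoryTheory.Limits
open scoped NNReal ENNReal

noncomputable section

/-!
Lifting `0 ⟶ X` against `p : E ⟶ B` in `Inj(I)` amounts to lifting any `g : X ⟶ B` to a chain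
map `X ⟶ E`. By Zorn's lemma there is a maximal partial lift, encoded by its graph, whose domain
is generated at the critical values of `X`; tameness makes the restriction from the last critical
value below `u` to `u` an isomorphism, so it suffices to reach every cochain at a critical value.
If the lift is not total, some cochain `y` at a critical value `c` lies outside its domain while
`d y` lies inside. The times at which `y` enters the domain form a ray `[t, ∞)` with `c < t`, and
lifting against `𝕊^{k+1}_{[c,t)} ⟶ 𝔻^{k+1}_c` (an element of `I₀`, or of `I∞` if `t = ∞`)
produces a partner for `y` compatible with the existing lift, contradicting maximality.
-/

namespace Submodule

variable {K M N : Type*} [Field K] [AddCommGroup M] [Module K M] [AddCommGroup N] [Module K N]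

noncomputable def linearMapOfGraph (G : Submodule K (M × N))
    (htot : ∀ x : M, ∃ y, (x, y) ∈ G) : M →ₗ[K] N :=
  G.toLinearPMap.toFun ∘ₗ LinearMap.id.codRestrict _ fun x =>
    (htot x).elim fun y hy => ⟨(x, y), hy, rfl⟩

lemma linearMapOfGraph_eq {G : Submodule K (M × N)} (hG : ∀ q ∈ G, q.1 = 0 → q.2 = 0)
    (htot : ∀ x : M, ∃ y, (x, y) ∈ G) {x : M} {y : N} (h : (x, y) ∈ G) :
    G.linearMapOfGraph htot x = y :=
  (existsUnique_from_graph (hG _) ⟨(x, y), h, rfl⟩).unique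
    (mem_graph_toLinearPMap hG ⟨x, _⟩) h

lemma graph_sup_span_singleton {G : Submodule K (M × N)} (hG : ∀ q ∈ G, q.1 = 0 → q.2 = 0)
    {x : M × N} (hx : ∀ y, (x.1, y) ∈ G → x ∈ G) : ∀ q ∈ G ⊔ span K {x}, q.1 = 0 → q.2 = 0 := by
  intro q hq hq₁
  obtain ⟨m, hm, n, hn, rfl⟩ := mem_sup.1 hq
  obtain ⟨a, rfl⟩ := mem_span_singleton.1 hn
  suffices a • x ∈ G from hG _ (add_mem hm this) hq₁
  by_cases ha : a = 0
  · rw [ha, zero_smul]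
    exact zero_mem _
  refine smul_mem _ _ (hx (-a⁻¹ • m.2) ?_)
  have hx₁ : x.1 = -a⁻¹ • m.1 := by
    rw [Prod.fst_add, Prod.smul_fst] at hq₁
    rw [← inv_smul_smul₀ ha x.1, eq_neg_of_add_eq_zero_right hq₁, smul_neg, neg_smul]
  rw [hx₁]
  exact smul_mem _ _ hm

end Submodule

namespace Pers

section PersistenceModule

variable {u v w : ℝ≥0}

lemma map_map_apply (V : PersMod) (huv : u ≤ v) (hvw : v ≤ w) (x : V.obj u) :
    V.map (homOfLE hvw) (V.map (homOfLE huv) x) = V.map (homOfLE (huv.trans hvw)) x := by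
  rw [← ConcreteCategory.comp_apply, ← Functor.map_comp, homOfLE_comp]

lemma map_self_apply (V : PersMod) (h : u ≤ u) (x : V.obj u) : V.map (homOfLE h) x = x := by
  rw [show homOfLE h = 𝟙 u from rfl, V.map_id]
  rfl

lemma d_d_apply (V : pCh) (i : ℕ) (x : (V.X i).obj u) :
    (V.d (i + 1) (i + 2)).app u ((V.d i (i + 1)).app u x) = 0 := by
  rw [← ConcreteCategory.comp_apply, ← NatTrans.comp_app, V.d_comp_d]
  rfl

lemma comm_app_apply {A B : pCh} (F : A ⟶ B) (i : ℕ) (x : (A.X i).obj u) :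
    (B.d i (i + 1)).app u ((F.f i).app u x) = (F.f (i + 1)).app u ((A.d i (i + 1)).app u x) := by
  rw [← ConcreteCategory.comp_apply, ← NatTrans.comp_app, F.comm, NatTrans.comp_app,
    ConcreteCategory.comp_apply]

/-- Compatible families over `[a, ∞)` stand in for elements at `a`; for `a = ⊤` they are empty. -/
def IsCompatibleFamily (V : PersMod) {a : ℝ≥0∞} (x : ∀ u : ℝ≥0, a ≤ u → V.obj u) : Prop :=
  ∀ (u v : ℝ≥0) (huv : u ≤ v) (hu : a ≤ u),
    V.map (homOfLE huv) (x u hu) = x v (hu.trans (ENNReal.coe_le_coe.2 huv))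

def restrictFamily (V : PersMod) {s : ℝ≥0} (x : V.obj s) :
    ∀ u : ℝ≥0, (s : ℝ≥0∞) ≤ u → V.obj u :=
  fun _ hu => V.map (homOfLE (ENNReal.coe_le_coe.1 hu)) x

lemma isCompatibleFamily_restrictFamily (V : PersMod) {s : ℝ≥0} (x : V.obj s) :
    IsCompatibleFamily V (restrictFamily V x) :=
  fun _ _ _ _ => map_map_apply _ _ _ x

end PersistenceModule

section IntervalModule

variable {a : ℝ≥0∞} {u v : ℝ≥0}

lemma icar_top_of_le (h : a ≤ u) : icar a ⊤ u = ⊤ :=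
  if_pos ⟨h, ENNReal.coe_lt_top⟩

lemma icar_top_of_not_le (h : ¬ a ≤ u) : icar a ⊤ u = ⊥ :=
  if_neg fun h' => h h'.1

def intervalGen (a : ℝ≥0∞) (u : ℝ≥0) (h : a ≤ u) : (intervalMod a ⊤).obj u :=
  ⟨1, by rw [icar_top_of_le h]; trivial⟩

lemma intervalMod_eq_smul_gen (h : a ≤ u) (x : (intervalMod a ⊤).obj u) :
    x = x.1 • intervalGen a u h :=
  Subtype.ext (mul_one x.1).symm

lemma intervalMod_eq_zero (h : ¬ a ≤ u) (x : (intervalMod a ⊤).obj u) : x = 0 :=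
  Subtype.ext ((Submodule.mem_bot ℚ).1 (icar_top_of_not_le h ▸ x.2))

lemma intervalMod_map_val (huv : u ≤ v) (x : (intervalMod a ⊤).obj u) :
    ((intervalMod a ⊤).map (homOfLE huv) x).1 = x.1 := by
  simp only [intervalMod, dif_pos ENNReal.coe_lt_top]
  rfl

lemma intervalMod_map_gen (huv : u ≤ v) (h : a ≤ u) (h' : a ≤ v) :
    (intervalMod a ⊤).map (homOfLE huv) (intervalGen a u h) = intervalGen a v h' :=
  Subtype.ext (intervalMod_map_val huv _)

variable {V : PersMod}

def intervalDesc (x : ∀ u : ℝ≥0, a ≤ u → V.obj u) (hx : IsCompatibleFamily V x) :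
    intervalMod a ⊤ ⟶ V where
  app u := ModuleCat.ofHom
    { toFun := fun y => y.1 • (if hu : a ≤ u then x u hu else 0)
      map_add' := fun y z => add_smul y.1 z.1 _
      map_smul' := fun c y => mul_smul c y.1 _ }
  naturality {u v} f := by
    have huv : u ≤ v := leOfHom f
    obtain rfl : f = homOfLE huv := rfl
    ext y
    change ((intervalMod a ⊤).map _ y).1 • _ = V.map _ (y.1 • _)
    rw [intervalMod_map_val, map_smul]
    by_cases hu : a ≤ u
    · rw [dif_pos hu, dif_pos (hu.trans (ENNReal.coe_le_coe.2 huv)), hx]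
    · rw [intervalMod_eq_zero hu y]
      exact (zero_smul ℚ _).trans (zero_smul ℚ _).symm

lemma intervalDesc_app_gen (x : ∀ u : ℝ≥0, a ≤ u → V.obj u) (hx : IsCompatibleFamily V x)
    (h : a ≤ u) : (intervalDesc x hx).app u (intervalGen a u h) = x u h := by
  change (1 : ℚ) • (if hu : a ≤ u then x u hu else 0) = _
  rw [dif_pos h, one_smul]

lemma intervalMod_hom_ext {F G : intervalMod a ⊤ ⟶ V}
    (h : ∀ (u : ℝ≥0) (hu : a ≤ u), F.app u (intervalGen a u hu) = G.app u (intervalGen a u hu)) :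
    F = G := by
  ext u x
  by_cases hu : a ≤ u
  · rw [intervalMod_eq_smul_gen hu x, map_smul, map_smul, h u hu]
  · rw [intervalMod_eq_zero hu x, map_zero, map_zero]

lemma intervalMod_hom_app_gen (F : intervalMod a ⊤ ⟶ V) (huv : u ≤ v) (hu : a ≤ u) (hv : a ≤ v) :
    F.app v (intervalGen a v hv) = V.map (homOfLE huv) (F.app u (intervalGen a u hu)) := by
  rw [← intervalMod_map_gen huv hu hv, NatTrans.naturality_apply]

end IntervalModule

section TwoStep

variable {m n : ℕ} {c d : ℝ≥0∞} {u : ℝ≥0}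

lemma phi_self : phi m c d m = c := if_pos rfl

lemma phi_succ : phi m c d (m + 1) = d := by
  simp [phi]

lemma phi_eq_top (h : n ≠ m) (h' : n ≠ m + 1) : phi m c d n = ⊤ := by
  simp [phi, h, h']

lemma not_phi_le (h : n ≠ m) (h' : n ≠ m + 1) : ¬ phi m c d n ≤ u := by
  rw [phi_eq_top h h', top_le_iff]
  exact ENNReal.coe_ne_top

lemma twoStep_d_gen (hdc : d ≤ c) (hu : phi m c d m ≤ u) (hu' : phi m c d (m + 1) ≤ u) :
    ((twoStep m c d).d m (m + 1)).app u (intervalGen _ u hu) = intervalGen _ u hu' := by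
  have hle : phi m c d (m + 1) ≤ phi m c d m := by rwa [phi_self, phi_succ]
  simp only [twoStep, and_self, if_true, intervalModHom, dif_pos hle]
  rfl

lemma twoStep_d_of_ne {i j : ℕ} (h : ¬(i = m ∧ j = m + 1)) : (twoStep m c d).d i j = 0 :=
  if_neg h

variable {V : pCh} (z : ∀ u : ℝ≥0, d ≤ u → (V.X (m + 1)).obj u)
  (w : ∀ u : ℝ≥0, c ≤ u → (V.X m).obj u)

def twoStepFamily (n : ℕ) (u : ℝ≥0) (h : phi m c d n ≤ u) : (V.X n).obj u :=
  if hn : n = m then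
    cast (by rw [hn]) (w u (by subst hn; rwa [phi_self] at h))
  else if hn' : n = m + 1 then
    cast (by rw [hn']) (z u (by subst hn'; rwa [phi_succ] at h))
  else absurd h (not_phi_le hn hn')

lemma twoStepFamily_self (h : phi m c d m ≤ u) (hc : c ≤ u) :
    twoStepFamily z w m u h = w u hc := by
  simp [twoStepFamily]

lemma twoStepFamily_succ (h : phi m c d (m + 1) ≤ u) (hd : d ≤ u) :
    twoStepFamily z w (m + 1) u h = z u hd := by
  simp [twoStepFamily]

variable {z w}

lemma isCompatibleFamily_twoStepFamily (hz : IsCompatibleFamily (V.X (m + 1)) z)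
    (hw : IsCompatibleFamily (V.X m) w) (n : ℕ) :
    IsCompatibleFamily (V.X n) (twoStepFamily z w n) := by
  intro u v huv h
  by_cases hn : n = m
  · subst hn
    have hc : c ≤ u := by rwa [phi_self] at h
    rw [twoStepFamily_self _ _ _ hc, twoStepFamily_self _ _ _ (hc.trans (by exact_mod_cast huv))]
    exact hw u v huv hc
  by_cases hn' : n = m + 1
  · subst hn'
    have hd : d ≤ u := by rwa [phi_succ] at h
    rw [twoStepFamily_succ _ _ _ hd, twoStepFamily_succ _ _ _ (hd.trans (by exact_mod_cast huv))]
    exact hz u v huv hd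
  · exact absurd h (not_phi_le hn hn')

def twoStepDesc (hz : IsCompatibleFamily (V.X (m + 1)) z) (hw : IsCompatibleFamily (V.X m) w)
    (hdc : d ≤ c) (hdz : ∀ u hu, (V.d (m + 1) (m + 2)).app u (z u hu) = 0)
    (hdw : ∀ u hu, (V.d m (m + 1)).app u (w u hu) = z u (hdc.trans hu)) :
    twoStep m c d ⟶ V where
  f n := intervalDesc (twoStepFamily z w n) (isCompatibleFamily_twoStepFamily hz hw n)
  comm' i j hij := by
    obtain rfl : i + 1 = j := hij
    refine intervalMod_hom_ext fun u hu => ?_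
    change (V.d i (i + 1)).app u ((intervalDesc (twoStepFamily z w i)
        (isCompatibleFamily_twoStepFamily hz hw i)).app u (intervalGen _ u hu))
      = (intervalDesc (twoStepFamily z w (i + 1)) (isCompatibleFamily_twoStepFamily hz hw _)).app u
          (((twoStep m c d).d i (i + 1)).app u (intervalGen _ u hu))
    rw [intervalDesc_app_gen]
    by_cases hi : i = m
    · subst hi
      have hc : c ≤ u := by rwa [phi_self] at hu
      have hu' : phi i c d (i + 1) ≤ u := by rw [phi_succ]; exact hdc.trans hc
      rw [twoStepFamily_self _ _ _ hc, hdw, twoStep_d_gen hdc hu hu', intervalDesc_app_gen,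
        twoStepFamily_succ]
    by_cases hi' : i = m + 1
    · subst hi'
      rw [twoStepFamily_succ _ _ _ (by rwa [phi_succ] at hu), hdz, twoStep_d_of_ne (by omega)]
      exact (map_zero _).symm
    · exact absurd hu (not_phi_le hi hi')

lemma twoStepDesc_f_self_gen (hz : IsCompatibleFamily (V.X (m + 1)) z)
    (hw : IsCompatibleFamily (V.X m) w) (hdc : d ≤ c)
    (hdz : ∀ u hu, (V.d (m + 1) (m + 2)).app u (z u hu) = 0)
    (hdw : ∀ u hu, (V.d m (m + 1)).app u (w u hu) = z u (hdc.trans hu))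
    (h : phi m c d m ≤ u) (hc : c ≤ u) :
    ((twoStepDesc hz hw hdc hdz hdw).f m).app u (intervalGen _ u h) = w u hc :=
  (intervalDesc_app_gen _ (isCompatibleFamily_twoStepFamily hz hw m) h).trans
    (twoStepFamily_self z w h hc)

lemma twoStepDesc_f_succ_gen (hz : IsCompatibleFamily (V.X (m + 1)) z)
    (hw : IsCompatibleFamily (V.X m) w) (hdc : d ≤ c)
    (hdz : ∀ u hu, (V.d (m + 1) (m + 2)).app u (z u hu) = 0)
    (hdw : ∀ u hu, (V.d m (m + 1)).app u (w u hu) = z u (hdc.trans hu))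
    (h : phi m c d (m + 1) ≤ u) (hd : d ≤ u) :
    ((twoStepDesc hz hw hdc hdz hdw).f (m + 1)).app u (intervalGen _ u h) = z u hd :=
  (intervalDesc_app_gen _ (isCompatibleFamily_twoStepFamily hz hw (m + 1)) h).trans
    (twoStepFamily_succ z w h hd)

lemma twoStep_hom_ext {F G : twoStep m c d ⟶ V}
    (h : ∀ (u : ℝ≥0) (hu : phi m c d m ≤ u),
      (F.f m).app u (intervalGen _ u hu) = (G.f m).app u (intervalGen _ u hu))
    (h' : ∀ (u : ℝ≥0) (hu : phi m c d (m + 1) ≤ u),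
      (F.f (m + 1)).app u (intervalGen _ u hu) = (G.f (m + 1)).app u (intervalGen _ u hu)) :
    F = G := by
  ext n : 1
  by_cases hn : n = m
  · subst hn
    exact intervalMod_hom_ext h
  by_cases hn' : n = m + 1
  · subst hn'
    exact intervalMod_hom_ext h'
  · exact intervalMod_hom_ext fun u hu => absurd hu (not_phi_le hn hn')

end TwoStep

section ClassifyingMaps

variable {V : pCh} {k : ℕ} {s : ℝ≥0} {u : ℝ≥0}

def diskDesc (b : (V.X k).obj s) : disk (k + 1) s ⟶ V :=
  twoStepDesc (isCompatibleFamily_restrictFamily _ ((V.d k (k + 1)).app s b))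
    (isCompatibleFamily_restrictFamily _ b) le_rfl
    (fun _ _ => by rw [restrictFamily, NatTrans.naturality_apply, d_d_apply, map_zero])
    (fun _ _ => NatTrans.naturality_apply _ _ b)

lemma diskDesc_f_self_gen (b : (V.X k).obj s) (h : phi k s s k ≤ u) (hs : (s : ℝ≥0∞) ≤ u) :
    ((diskDesc b).f k).app u (intervalGen _ u h) = restrictFamily _ b u hs :=
  twoStepDesc_f_self_gen _ _ _ _ _ h hs

lemma diskDesc_f_succ_gen (b : (V.X k).obj s) (h : phi k s s (k + 1) ≤ u)
    (hs : (s : ℝ≥0∞) ≤ u) :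
    ((diskDesc b).f (k + 1)).app u (intervalGen _ u h) =
      restrictFamily _ ((V.d k (k + 1)).app s b) u hs :=
  twoStepDesc_f_succ_gen _ _ _ _ _ h hs

variable {t : ℝ≥0∞} (hst : (s : ℝ≥0∞) < t) {ξ : (V.X (k + 1)).obj s}
  (hξ : (V.d (k + 1) (k + 2)).app s ξ = 0) {η : ∀ u : ℝ≥0, t ≤ u → (V.X k).obj u}
  (hη : IsCompatibleFamily (V.X k) η)
  (hdη : ∀ u hu, (V.d k (k + 1)).app u (η u hu) = restrictFamily _ ξ u (hst.le.trans hu))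

def sphereDesc : sphere (k + 1) s t ⟶ V :=
  twoStepDesc (isCompatibleFamily_restrictFamily _ ξ) hη hst.le
    (fun _ _ => by rw [restrictFamily, NatTrans.naturality_apply, hξ, map_zero]) hdη

lemma sphereDesc_f_self_gen (h : phi k t s k ≤ u) (ht : t ≤ u) :
    ((sphereDesc hst hξ hη hdη).f k).app u (intervalGen _ u h) = η u ht :=
  twoStepDesc_f_self_gen _ _ _ _ _ h ht

lemma sphereDesc_f_succ_gen (h : phi k t s (k + 1) ≤ u) (hs : (s : ℝ≥0∞) ≤ u) :
    ((sphereDesc hst hξ hη hdη).f (k + 1)).app u (intervalGen _ u h) = restrictFamily _ ξ u hs :=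
  twoStepDesc_f_succ_gen _ _ _ _ _ h hs

end ClassifyingMaps

section Lifting

variable {E B : pCh} {p : E ⟶ B}

lemma Inj.hasLiftingProperty_sphereToDisk (hp : Inj Imem p) (k : ℕ) (s : ℝ≥0) {t : ℝ≥0∞}
    (hst : (s : ℝ≥0∞) < t) : HasLiftingProperty (sphereToDisk k s t hst.le) p := by
  induction t using ENNReal.recTopCoe with
  | top => exact hp _ (Or.inr (IinfMem.mk k s))
  | coe t => exact hp _ (Or.inl (I0mem.mk k s t (ENNReal.coe_lt_coe.1 hst)))

lemma commSq_sphereDesc_diskDesc {k : ℕ} {s : ℝ≥0} {t : ℝ≥0∞} (hst : (s : ℝ≥0∞) < t)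
    {ξ : (E.X (k + 1)).obj s} (hξ : (E.d (k + 1) (k + 2)).app s ξ = 0) {b : (B.X k).obj s}
    (hb : (p.f (k + 1)).app s ξ = (B.d k (k + 1)).app s b)
    {η : ∀ u : ℝ≥0, t ≤ u → (E.X k).obj u} (hη : IsCompatibleFamily (E.X k) η)
    (hdη : ∀ u hu, (E.d k (k + 1)).app u (η u hu) = restrictFamily _ ξ u (hst.le.trans hu))
    (hpη : ∀ u hu, (p.f k).app u (η u hu) = restrictFamily _ b u (hst.le.trans hu)) :
    CommSq (sphereDesc hst hξ hη hdη) (sphereToDisk (k + 1) s t hst.le) p (diskDesc b) := by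
  refine ⟨twoStep_hom_ext (fun u hu => ?_) (fun u hu => ?_)⟩
  · have htu : t ≤ u := by rwa [phi_self] at hu
    refine (congrArg ((p.f k).app u) (sphereDesc_f_self_gen hst hξ hη hdη hu htu)).trans ?_
    rw [hpη]
    exact (diskDesc_f_self_gen b (by rw [phi_self]; exact hst.le.trans htu) _).symm
  · have hsu : (s : ℝ≥0∞) ≤ u := by rwa [phi_succ] at hu
    refine (congrArg ((p.f (k + 1)).app u) (sphereDesc_f_succ_gen hst hξ hη hdη hu hsu)).trans ?_
    rw [restrictFamily, NatTrans.naturality_apply, hb]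
    exact (diskDesc_f_succ_gen b (by rwa [phi_succ]) hsu).symm

/-- Lifting against `𝕊^{k+1}_{[s,t)} ⟶ 𝔻^{k+1}_s`, read off on elements. -/
lemma Inj.exists_primitive (hp : Inj Imem p) {k : ℕ} {s : ℝ≥0} {t : ℝ≥0∞}
    (hst : (s : ℝ≥0∞) < t) (ξ : (E.X (k + 1)).obj s) (hξ : (E.d (k + 1) (k + 2)).app s ξ = 0)
    (b : (B.X k).obj s) (hb : (p.f (k + 1)).app s ξ = (B.d k (k + 1)).app s b)
    (η : ∀ u : ℝ≥0, t ≤ u → (E.X k).obj u) (hη : IsCompatibleFamily (E.X k) η)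
    (hdη : ∀ u hu, (E.d k (k + 1)).app u (η u hu) = restrictFamily _ ξ u (hst.le.trans hu))
    (hpη : ∀ u hu, (p.f k).app u (η u hu) = restrictFamily _ b u (hst.le.trans hu)) :
    ∃ e : (E.X k).obj s, (E.d k (k + 1)).app s e = ξ ∧ (p.f k).app s e = b ∧
      ∀ u hu, restrictFamily _ e u (hst.le.trans hu) = η u hu := by
  have sq := commSq_sphereDesc_diskDesc hst hξ hb hη hdη hpη
  have := hp.hasLiftingProperty_sphereToDisk (k + 1) s hst
  obtain ⟨⟨l, hl₁, hl₂⟩⟩ := (HasLiftingProperty.sq_hasLift sq).exists_lift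
  have hs : phi k s s k ≤ s := phi_self.le
  have hs' : phi k s s (k + 1) ≤ s := phi_succ.le
  refine ⟨(l.f k).app s (intervalGen _ s hs), ?_, ?_, fun u hu => ?_⟩
  · calc (E.d k (k + 1)).app s ((l.f k).app s (intervalGen _ s hs))
        = (l.f (k + 1)).app s (((disk (k + 1) s).d k (k + 1)).app s (intervalGen _ s hs)) :=
          comm_app_apply l k _
      _ = (l.f (k + 1)).app s (intervalGen _ s hs') := congrArg _ (twoStep_d_gen le_rfl hs hs')
      _ = ((sphereToDisk (k + 1) s t hst.le ≫ l).f (k + 1)).app s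
            (intervalGen (phi k t s (k + 1)) s phi_succ.le) := rfl
      _ = ξ := by
          rw [hl₁, sphereDesc_f_succ_gen hst hξ hη hdη _ le_rfl]
          exact map_self_apply _ _ ξ
  · calc (p.f k).app s ((l.f k).app s (intervalGen _ s hs))
        = ((l ≫ p).f k).app s (intervalGen _ s hs) := rfl
      _ = b := by
          rw [hl₂, diskDesc_f_self_gen b hs le_rfl]
          exact map_self_apply _ _ b
  · have hu' : phi k s s k ≤ u := by rw [phi_self]; exact hst.le.trans hu
    calc restrictFamily _ ((l.f k).app s (intervalGen _ s hs)) u (hst.le.trans hu)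
        = (l.f k).app u (intervalGen _ u hu') := (intervalMod_hom_app_gen _ _ hs hu').symm
      _ = ((sphereToDisk (k + 1) s t hst.le ≫ l).f k).app u
            (intervalGen (phi k t s k) u (by rwa [phi_self])) := rfl
      _ = η u hu := by rw [hl₁, sphereDesc_f_self_gen]

end Lifting

section Critical

variable (T : Finset ℝ≥0) (u : ℝ≥0)

/-- `0` is counted as critical so that every `u` has a critical value below it. -/
def lastCritical : ℝ≥0 :=
  ((insert 0 T).filter (· ≤ u)).max' ⟨0, by simp⟩

lemma lastCritical_mem_filter : lastCritical T u ∈ (insert 0 T).filter (· ≤ u) :=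
  Finset.max'_mem _ _

lemma lastCritical_le : lastCritical T u ≤ u :=
  (Finset.mem_filter.1 (lastCritical_mem_filter T u)).2

lemma lastCritical_mem : lastCritical T u ∈ insert 0 T :=
  (Finset.mem_filter.1 (lastCritical_mem_filter T u)).1

variable {T u}

lemma le_lastCritical {c : ℝ≥0} (hc : c ∈ insert 0 T) (hcu : c ≤ u) : c ≤ lastCritical T u :=
  Finset.le_max' _ c (Finset.mem_filter.2 ⟨hc, hcu⟩)

lemma isIso_map_lastCritical {X : pCh}
    (hT : ∀ (s u : ℝ≥0) (h : s ≤ u), (∀ r ∈ T, ¬(s < r ∧ r ≤ u)) → ∀ k : ℕ,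
      IsIso ((X.X k).map (homOfLE h)))
    (k : ℕ) : IsIso ((X.X k).map (homOfLE (lastCritical_le T u))) :=
  hT _ u _ (fun _ hr hlt => hlt.1.not_ge (le_lastCritical (Finset.mem_insert_of_mem hr) hlt.2)) k

lemma exists_ray_eq (C : Finset ℝ≥0) {P : ℝ≥0 → Prop} (hP : ∀ u v, u ≤ v → P u → P v)
    (hC : ∀ u, P u → ∃ r ∈ C, r ≤ u ∧ P r) : ∃ t : ℝ≥0∞, ∀ u : ℝ≥0, P u ↔ t ≤ u := by
  classical
  refine ⟨(C.filter P).inf (↑), fun u => ⟨fun hu => ?_, fun hu => ?_⟩⟩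
  · obtain ⟨r, hr, hru, hPr⟩ := hC u hu
    exact (Finset.inf_le (Finset.mem_filter.2 ⟨hr, hPr⟩)).trans (ENNReal.coe_le_coe.2 hru)
  · have hne : (C.filter P).Nonempty := by
      by_contra h
      rw [Finset.not_nonempty_iff_eq_empty.1 h, Finset.inf_empty, top_le_iff] at hu
      exact ENNReal.coe_ne_top hu
    obtain ⟨r, hr, hr'⟩ := Finset.exists_mem_eq_inf _ hne ((↑) : ℝ≥0 → ℝ≥0∞)
    rw [hr'] at hu
    exact hP r u (ENNReal.coe_le_coe.1 hu) (Finset.mem_filter.1 hr).2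

end Critical

section PartialLift

variable (X E : pCh)

abbrev Relations : Type := ∀ (k : ℕ) (u : ℝ≥0), Submodule ℚ ((X.X k).obj u × (E.X k).obj u)

def restrictPair (k : ℕ) {u v : ℝ≥0} (h : u ≤ v) :
    ((X.X k).obj u × (E.X k).obj u) →ₗ[ℚ] ((X.X k).obj v × (E.X k).obj v) :=
  ((X.X k).map (homOfLE h)).hom.prodMap ((E.X k).map (homOfLE h)).hom

def dPair (k : ℕ) (u : ℝ≥0) :
    ((X.X k).obj u × (E.X k).obj u) →ₗ[ℚ] ((X.X (k + 1)).obj u × (E.X (k + 1)).obj u) :=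
  ((X.d k (k + 1)).app u).hom.prodMap ((E.d k (k + 1)).app u).hom

variable {X E} {k : ℕ} {u v w : ℝ≥0}

lemma restrictPair_mk {v : ℝ≥0} (h : u ≤ v) (x : (X.X k).obj u) (e : (E.X k).obj u) :
    restrictPair X E k h (x, e) = ((X.X k).map (homOfLE h) x, (E.X k).map (homOfLE h) e) :=
  rfl

lemma dPair_mk (x : (X.X k).obj u) (e : (E.X k).obj u) :
    dPair X E k u (x, e) = ((X.d k (k + 1)).app u x, (E.d k (k + 1)).app u e) :=
  rfl

lemma restrictPair_restrictPair (huv : u ≤ v) (hvw : v ≤ w) (q : (X.X k).obj u × (E.X k).obj u) :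
    restrictPair X E k hvw (restrictPair X E k huv q) = restrictPair X E k (huv.trans hvw) q :=
  Prod.ext (map_map_apply _ _ _ _) (map_map_apply _ _ _ _)

lemma restrictPair_self (h : u ≤ u) (q : (X.X k).obj u × (E.X k).obj u) :
    restrictPair X E k h q = q :=
  Prod.ext (map_self_apply _ _ _) (map_self_apply _ _ _)

lemma dPair_restrictPair (h : u ≤ v) (q : (X.X k).obj u × (E.X k).obj u) :
    dPair X E k v (restrictPair X E k h q) = restrictPair X E (k + 1) h (dPair X E k u q) :=
  Prod.ext (NatTrans.naturality_apply (X.d k (k + 1)) (homOfLE h) q.1)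
    (NatTrans.naturality_apply (E.d k (k + 1)) (homOfLE h) q.2)

variable {B : pCh} (T : Finset ℝ≥0) (p : E ⟶ B) (g : X ⟶ B)

/-- `G` is the graph of a lift of `g` through `p`, defined on a subcomplex of `X` that is
generated at the critical values `T ∪ {0}`. -/
structure IsPartialLift (G : Relations X E) : Prop where
  map_restrictPair_le {k : ℕ} {u v : ℝ≥0} (h : u ≤ v) :
    (G k u).map (restrictPair X E k h) ≤ G k v
  map_dPair_le (k : ℕ) (u : ℝ≥0) : (G k u).map (dPair X E k u) ≤ G (k + 1) u
  graph (k : ℕ) (u : ℝ≥0) : ∀ q ∈ G k u, q.1 = 0 → q.2 = 0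
  le_eqLocus (k : ℕ) (u : ℝ≥0) : G k u ≤
    LinearMap.eqLocus (((p.f k).app u).hom ∘ₗ LinearMap.snd ℚ _ _)
      (((g.f k).app u).hom ∘ₗ LinearMap.fst ℚ _ _)
  le_map_lastCritical (k : ℕ) (u : ℝ≥0) :
    G k u ≤ (G k (lastCritical T u)).map (restrictPair X E k (lastCritical_le T u))

variable {T p g}

lemma isPartialLift_bot : IsPartialLift T p g ⊥ where
  map_restrictPair_le _ := (Submodule.map_bot _).le
  map_dPair_le _ _ := (Submodule.map_bot _).le
  graph _ _ q hq _ := by rw [(Submodule.mem_bot ℚ).1 hq]; rfl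
  le_eqLocus _ _ := bot_le
  le_map_lastCritical _ _ := bot_le

lemma isPartialLift_iSup {ι : Type*} [Nonempty ι] {G : ι → Relations X E}
    (hdir : Directed (· ≤ ·) G) (hG : ∀ i, IsPartialLift T p g (G i)) :
    IsPartialLift T p g (⨆ i, G i) := by
  have happ : ∀ k u, (⨆ i, G i) k u = ⨆ i, G i k u := fun k u => by
    rw [iSup_apply, iSup_apply]
  constructor
  · intro k u v h
    rw [happ, happ, Submodule.map_iSup]
    exact iSup_mono fun i => (hG i).map_restrictPair_le h
  · intro k u
    rw [happ, happ, Submodule.map_iSup]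
    exact iSup_mono fun i => (hG i).map_dPair_le k u
  · intro k u q hq
    rw [happ] at hq
    obtain ⟨i, hi⟩ := (Submodule.mem_iSup_of_directed _
      fun i j => (hdir i j).imp fun _ h => ⟨h.1 k u, h.2 k u⟩).1 hq
    exact (hG i).graph k u q hi
  · intro k u
    rw [happ]
    exact iSup_le fun i => (hG i).le_eqLocus k u
  · intro k u
    rw [happ, happ, Submodule.map_iSup]
    exact iSup_mono fun i => (hG i).le_map_lastCritical k u

lemma exists_maximal_isPartialLift :
    ∃ M, IsPartialLift T p g M ∧ ∀ G, IsPartialLift T p g G → M ≤ G → G ≤ M := by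
  obtain ⟨M, -, hM⟩ := zorn_le_nonempty₀ {G | IsPartialLift T p g G}
    (fun C hC hchain G₀ hG₀ => by
      have : Nonempty C := ⟨⟨G₀, hG₀⟩⟩
      exact ⟨⨆ G : C, G.1, isPartialLift_iSup hchain.directedOn.directed_val fun G => hC G.2,
        fun G hG => le_iSup (fun G : C => G.1) ⟨G, hG⟩⟩)
    ⊥ isPartialLift_bot
  exact ⟨M, hM.1, fun G hG hle => hM.2 hG hle⟩

lemma IsPartialLift.restrictPair_mem {G : Relations X E} (hG : IsPartialLift T p g G)
    (h : u ≤ v) {q : (X.X k).obj u × (E.X k).obj u} (hq : q ∈ G k u) :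
    restrictPair X E k h q ∈ G k v :=
  hG.map_restrictPair_le h (Submodule.mem_map_of_mem hq)

lemma IsPartialLift.dPair_mem {G : Relations X E} (hG : IsPartialLift T p g G)
    {q : (X.X k).obj u × (E.X k).obj u} (hq : q ∈ G k u) : dPair X E k u q ∈ G (k + 1) u :=
  hG.map_dPair_le k u (Submodule.mem_map_of_mem hq)

lemma IsPartialLift.comp_apply {G : Relations X E} (hG : IsPartialLift T p g G)
    {q : (X.X k).obj u × (E.X k).obj u} (hq : q ∈ G k u) : (p.f k).app u q.2 = (g.f k).app u q.1 :=
  hG.le_eqLocus k u hq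

lemma IsPartialLift.snd_eq {G : Relations X E} (hG : IsPartialLift T p g G)
    {x : (X.X k).obj u} {e e' : (E.X k).obj u} (h : (x, e) ∈ G k u) (h' : (x, e') ∈ G k u) :
    e = e' :=
  sub_eq_zero.1 (hG.graph k u _ (sub_mem h h') (sub_self x))

end PartialLift

section Extension

variable {X E B : pCh} {T : Finset ℝ≥0} {p : E ⟶ B} {g : X ⟶ B} {k : ℕ} {c : ℝ≥0}

def spanFrom (k : ℕ) (c : ℝ≥0) (q : (X.X k).obj c × (E.X k).obj c) : Relations X E :=
  Function.update ⊥ k fun u =>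
    if h : c ≤ u then Submodule.span ℚ {restrictPair X E k h q} else ⊥

lemma spanFrom_induction {q : (X.X k).obj c × (E.X k).obj c}
    {P : ∀ (k' : ℕ) (u : ℝ≥0), Submodule ℚ ((X.X k').obj u × (E.X k').obj u) → Prop}
    (bot : ∀ k' u, P k' u ⊥)
    (span : ∀ u (h : c ≤ u), P k u (Submodule.span ℚ {restrictPair X E k h q})) (k' : ℕ)
    (u : ℝ≥0) : P k' u (spanFrom k c q k' u) := by
  by_cases hk : k' = k
  · subst hk
    by_cases h : c ≤ u
    · simpa [spanFrom, h] using span u h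
    · simpa [spanFrom, h] using bot k' u
  · simpa [spanFrom, hk] using bot k' u

lemma restrictPair_mem_spanFrom (q : (X.X k).obj c × (E.X k).obj c) {u : ℝ≥0} (h : c ≤ u) :
    restrictPair X E k h q ∈ spanFrom k c q k u := by
  simp [spanFrom, h]

variable {M : Relations X E} {q : (X.X k).obj c × (E.X k).obj c}

lemma IsPartialLift.sup_spanFrom (hM : IsPartialLift T p g M) (hc : c ∈ insert 0 T)
    (hd : dPair X E k c q ∈ M (k + 1) c) (hq : (p.f k).app c q.2 = (g.f k).app c q.1)
    (hdom : ∀ u (h : c ≤ u) e, ((X.X k).map (homOfLE h) q.1, e) ∈ M k u →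
      restrictPair X E k h q ∈ M k u) :
    IsPartialLift T p g (M ⊔ spanFrom k c q) where
  map_restrictPair_le {k' u v} h := by
    refine (Submodule.map_sup _ _ _).le.trans (sup_le_sup (hM.map_restrictPair_le h) ?_)
    refine spanFrom_induction (P := fun k' u S => ∀ v (h : u ≤ v),
      S.map (restrictPair X E k' h) ≤ spanFrom k c q k' v) (fun _ _ _ _ => ?_) (fun u hu v h => ?_)
      k' u v h
    · exact (Submodule.map_bot _).le.trans bot_le
    · rw [Submodule.map_span, Set.image_singleton, restrictPair_restrictPair,
        Submodule.span_singleton_le_iff_mem]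
      exact restrictPair_mem_spanFrom q _
  map_dPair_le k' u := by
    refine (Submodule.map_sup _ _ _).le.trans (sup_le (le_sup_of_le_left (hM.map_dPair_le k' u))
      (le_sup_of_le_left ?_))
    refine spanFrom_induction (P := fun k' u S => S.map (dPair X E k' u) ≤ M (k' + 1) u)
      (fun _ _ => (Submodule.map_bot _).le.trans bot_le) (fun u h => ?_) k' u
    rw [Submodule.map_span, Set.image_singleton, Submodule.span_singleton_le_iff_mem,
      dPair_restrictPair]
    exact hM.restrictPair_mem h hd
  graph k' u := by
    refine spanFrom_induction (P := fun k' u S => ∀ q ∈ M k' u ⊔ S, q.1 = 0 → q.2 = 0)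
      (fun k' u => by simpa using hM.graph k' u) (fun u h => ?_) k' u
    exact Submodule.graph_sup_span_singleton (hM.graph k u) fun e he => hdom u h e he
  le_eqLocus k' u := by
    refine sup_le (hM.le_eqLocus k' u) (spanFrom_induction (P := fun k' u S => S ≤
      LinearMap.eqLocus (((p.f k').app u).hom ∘ₗ LinearMap.snd ℚ _ _)
        (((g.f k').app u).hom ∘ₗ LinearMap.fst ℚ _ _)) (fun _ _ => bot_le) (fun u h => ?_) k' u)
    rw [Submodule.span_singleton_le_iff_mem, LinearMap.mem_eqLocus]
    change (p.f k).app u ((E.X k).map _ q.2) = (g.f k).app u ((X.X k).map _ q.1)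
    rw [NatTrans.naturality_apply, NatTrans.naturality_apply, hq]
  le_map_lastCritical k' u := by
    refine sup_le ((hM.le_map_lastCritical k' u).trans (Submodule.map_mono le_sup_left))
      ((spanFrom_induction (P := fun k' u S => S ≤ (spanFrom k c q k' (lastCritical T u)).map
        (restrictPair X E k' (lastCritical_le T u))) (fun _ _ => bot_le) (fun u h => ?_) k' u).trans
        (Submodule.map_mono le_sup_right))
    have hcu : c ≤ lastCritical T u := le_lastCritical hc h
    rw [Submodule.span_singleton_le_iff_mem, ← restrictPair_restrictPair hcu]
    exact Submodule.mem_map_of_mem (restrictPair_mem_spanFrom q hcu)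

variable {u : ℝ≥0}

lemma IsPartialLift.exists_mem_lastCritical (hM : IsPartialLift T p g M)
    [IsIso ((X.X k).map (homOfLE (lastCritical_le T u)))] {x : (X.X k).obj (lastCritical T u)}
    {e : (E.X k).obj u} (h : ((X.X k).map (homOfLE (lastCritical_le T u)) x, e) ∈ M k u) :
    ∃ e', (x, e') ∈ M k (lastCritical T u) := by
  obtain ⟨q, hq, hqx⟩ := hM.le_map_lastCritical k u h
  have hq₁ : q.1 = x := (ConcreteCategory.bijective_of_isIso _).1 (congrArg Prod.fst hqx)
  exact ⟨q.2, hq₁ ▸ hq⟩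

lemma IsPartialLift.exists_domain_eq_ray (hM : IsPartialLift T p g M)
    (hT : ∀ k u, IsIso ((X.X k).map (homOfLE (lastCritical_le T u)))) (hc : c ∈ insert 0 T)
    (y : (X.X k).obj c) : ∃ t : ℝ≥0∞, ∀ u : ℝ≥0,
      (∃ (h : c ≤ u) (e : (E.X k).obj u), ((X.X k).map (homOfLE h) y, e) ∈ M k u) ↔ t ≤ u := by
  apply exists_ray_eq (insert 0 T)
  · rintro u v huv ⟨h, e, he⟩
    refine ⟨h.trans huv, (E.X k).map (homOfLE huv) e, ?_⟩
    simpa only [restrictPair_mk, map_map_apply] using hM.restrictPair_mem huv he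
  · rintro u ⟨h, e, he⟩
    have := hT k u
    have hcu := le_lastCritical hc h
    refine ⟨_, lastCritical_mem T u, lastCritical_le T u, hcu,
      hM.exists_mem_lastCritical (x := (X.X k).map (homOfLE hcu) y) (e := e) ?_⟩
    rwa [map_map_apply]

lemma IsPartialLift.exists_extension (hM : IsPartialLift T p g M)
    (hT : ∀ k u, IsIso ((X.X k).map (homOfLE (lastCritical_le T u)))) (hp : Inj Imem p)
    (hc : c ∈ insert 0 T) {y : (X.X k).obj c} (hy : ∀ e, (y, e) ∉ M k c)
    {ξ : (E.X (k + 1)).obj c} (hξ : ((X.d k (k + 1)).app c y, ξ) ∈ M (k + 1) c) :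
    ∃ e : (E.X k).obj c, (E.d k (k + 1)).app c e = ξ ∧ (p.f k).app c e = (g.f k).app c y ∧
      ∀ u (h : c ≤ u) e', ((X.X k).map (homOfLE h) y, e') ∈ M k u →
        restrictPair X E k h (y, e) ∈ M k u := by
  obtain ⟨t, ht⟩ := hM.exists_domain_eq_ray hT hc y
  have hct : (c : ℝ≥0∞) < t := by
    refine lt_of_not_ge fun htc => ?_
    obtain ⟨h, e, he⟩ := (ht c).2 htc
    exact hy e (by rwa [map_self_apply] at he)
  have hcu : ∀ {u : ℝ≥0}, t ≤ u → c ≤ u := fun hu => ENNReal.coe_le_coe.1 (hct.le.trans hu)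
  have hpartner : ∀ (u : ℝ≥0) (hu : t ≤ u), ∃ e, ((X.X k).map (homOfLE (hcu hu)) y, e) ∈ M k u :=
    fun u hu => by
      obtain ⟨_, e, he⟩ := (ht u).2 hu
      exact ⟨e, he⟩
  -- the partners `η` of `y` after `t` are the primitives fed to the lifting property
  choose η hη using hpartner
  obtain ⟨e, hde, hpe, hext⟩ := hp.exists_primitive hct ξ
    (hM.graph (k + 2) c _ (hM.dPair_mem hξ) (d_d_apply X k y)) ((g.f k).app c y)
    ((hM.comp_apply hξ).trans (comm_app_apply g k y).symm) η
    (fun u v huv hu => hM.snd_eq (by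
      simpa only [restrictPair_mk, map_map_apply] using hM.restrictPair_mem huv (hη u hu))
      (hη v _))
    (fun u hu => by
      have hd : ((X.d k (k + 1)).app u ((X.X k).map (homOfLE (hcu hu)) y),
          (E.d k (k + 1)).app u (η u hu)) ∈ M (k + 1) u := hM.dPair_mem (hη u hu)
      have hr := hM.restrictPair_mem (hcu hu) hξ
      rw [restrictPair_mk, ← NatTrans.naturality_apply] at hr
      exact hM.snd_eq hd hr)
    (fun u hu => (hM.comp_apply (hη u hu)).trans (NatTrans.naturality_apply _ _ _))
  refine ⟨e, hde, hpe, fun u h e' he' => ?_⟩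
  have htu : t ≤ u := (ht u).1 ⟨h, e', he'⟩
  rw [restrictPair_mk, show (E.X k).map (homOfLE h) e = η u htu from hext u htu]
  exact hη u htu

end Extension

section Totality

variable {X E B : pCh} {T : Finset ℝ≥0} {p : E ⟶ B} {g : X ⟶ B} {M : Relations X E}

lemma IsPartialLift.exists_mem_of_maximal (hM : IsPartialLift T p g M)
    (hmax : ∀ G, IsPartialLift T p g G → M ≤ G → G ≤ M)
    (hT : ∀ k u, IsIso ((X.X k).map (homOfLE (lastCritical_le T u)))) (hp : Inj Imem p)
    (k : ℕ) (u : ℝ≥0) (x : (X.X k).obj u) : ∃ e, (x, e) ∈ M k u := by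
  suffices hcrit : ∀ k, ∀ c ∈ insert 0 T, ∀ y : (X.X k).obj c, ∃ e, (y, e) ∈ M k c by
    have := hT k u
    obtain ⟨y, rfl⟩ := (ConcreteCategory.bijective_of_isIso
      ((X.X k).map (homOfLE (lastCritical_le T u)))).2 x
    obtain ⟨e, he⟩ := hcrit k _ (lastCritical_mem T u) y
    exact ⟨_, hM.restrictPair_mem _ he⟩
  by_contra! h
  obtain ⟨k, c, hc, y, hy, ξ, hξ⟩ : ∃ k, ∃ c ∈ insert 0 T, ∃ y : (X.X k).obj c,
      (∀ e, (y, e) ∉ M k c) ∧ ∃ ξ, ((X.d k (k + 1)).app c y, ξ) ∈ M (k + 1) c := by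
    obtain ⟨k, c, hc, y, hy⟩ := h
    by_cases hdy : ∃ ξ, ((X.d k (k + 1)).app c y, ξ) ∈ M (k + 1) c
    · exact ⟨k, c, hc, y, hy, hdy⟩
    · exact ⟨k + 1, c, hc, _, fun e he => hdy ⟨e, he⟩, 0, by rw [d_d_apply]; exact zero_mem _⟩
  obtain ⟨e, hde, hpe, hdom⟩ := hM.exists_extension hT hp hc hy hξ
  have hle := hmax _ (hM.sup_spanFrom hc (q := (y, e)) (by rwa [dPair_mk, hde]) hpe hdom)
    le_sup_left
  refine hy e (hle k c (Submodule.mem_sup_right ?_))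
  simpa only [restrictPair_self] using restrictPair_mem_spanFrom (y, e) le_rfl

lemma IsPartialLift.exists_hom (hM : IsPartialLift T p g M)
    (htot : ∀ k u (x : (X.X k).obj u), ∃ e, (x, e) ∈ M k u) : ∃ l : X ⟶ E, l ≫ p = g := by
  let L k u : (X.X k).obj u →ₗ[ℚ] (E.X k).obj u := (M k u).linearMapOfGraph (htot k u)
  have hL : ∀ {k u x e}, (x, e) ∈ M k u → L k u x = e := fun {k u} =>
    Submodule.linearMapOfGraph_eq (hM.graph k u) (htot k u)
  have hmem : ∀ k u x, (x, L k u x) ∈ M k u := fun k u x => by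
    obtain ⟨e, he⟩ := htot k u x
    rwa [hL he]
  refine ⟨{ f k := { app u := ModuleCat.ofHom (L k u), naturality := ?_ }, comm' := ?_ }, ?_⟩
  · intro u v f
    ext x
    exact hL (hM.restrictPair_mem (leOfHom f) (hmem k u x))
  · rintro i _ rfl
    ext u x
    exact (hL (hM.dPair_mem (hmem i u x))).symm
  · ext k u x
    exact hM.comp_apply (hmem k u x)

end Totality

theorem exists_lift_of_tame {X E B : pCh} (hX : TamePCh X) {p : E ⟶ B} (hp : Inj Imem p)
    (g : X ⟶ B) : ∃ l : X ⟶ E, l ≫ p = g := by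
  obtain ⟨T, hT⟩ := hX
  have hT' : ∀ k u, IsIso ((X.X k).map (homOfLE (lastCritical_le T u))) :=
    fun k u => isIso_map_lastCritical hT k
  obtain ⟨M, hM, hmax⟩ := exists_maximal_isPartialLift (T := T) (p := p) (g := g)
  exact hM.exists_hom (hM.exists_mem_of_maximal hmax hT' hp)

open ZeroObject in
/-- Every tame object `X` of `pCh` is cofibrant in the
interval-sphere model structure: the unique map `0 ⟶ X` belongs to `Cof(I)`. -/
theorem cofibrant_of_tame (X : pCh) (hX : TamePCh X) :
    Cof Imem (0 : (0 : pCh) ⟶ X) := by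
  intro E B p hp
  refine ⟨fun {_ g} _ => ?_⟩
  obtain ⟨l, hl⟩ := exists_lift_of_tame hX hp g
  exact ⟨⟨⟨l, (isZero_zero pCh).eq_of_src _ _, hl⟩⟩⟩

end Pers
end
end
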